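/- Let U = {(x,y) ∈ ℝ² : y > 0} be the upper half-plane, and let d_m be the length metric induced by the norm ‖v‖_m = max{‖v‖_e, ‖v‖_h} on U, where ‖v‖_e is the Euclidean norm and ‖v‖_h = ‖v‖_e / y is the hyperbolic norm at the point (x,y). Then for all 0 < y₁ < 1 < y₂, the distance between the points (0, y₁) and (0, y₂) satisfies d_m((0,y₁), (0,y₂)) = (y₂ − 1) − log(y₁). -/

import Mathlib

/-! The `d_m`-length element at height `y` is `max 1 y⁻¹ · ‖v‖ ≥ max 1 y⁻¹ · |v₂| = |dF(y)|`, where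
`F` is the antiderivative of `max 1 y⁻¹` equal to `log y` for `y ≤ 1` and to `y - 1` for `y ≥ 1`.
So every path from `(0, y₁)` to `(0, y₂)` has length at least `F y₂ - F y₁ = (y₂ - 1) - log y₁`,
and the vertical segment, along which both inequalities are equalities, attains it. Only the fact
that the conformal factor depends on a single coordinate matters. -/

open Set
open scoped ENNReal

noncomputable section

variable {n : ℕ}

/-- A path `γ : [a,b] → ℝⁿ` is piecewise `C¹`: continuous on `[a,b]` and `C¹` on each
piece of some partition `a = T₀ ≤ … ≤ T_k = b`. -/
def IsPiecewiseC1On (γ : ℝ → EuclideanSpace ℝ (Fin n)) (a b : ℝ) : Prop :=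
  a ≤ b ∧ ContinuousOn γ (Icc a b) ∧
  ∃ (k : ℕ) (T : Fin (k + 1) → ℝ), Monotone T ∧ T 0 = a ∧ T (Fin.last k) = b ∧
    ∀ i : Fin k, ContDiffOn ℝ 1 γ (Icc (T i.castSucc) (T i.succ))

/-- The length of a path `γ : [a,b] → ℝⁿ` with respect to a family of (weak) norms
`L (point) (vector)`: `∫ₐᵇ L (γ s) (γ̇ s) ds`. -/
noncomputable def lagrangianLen
    (L : EuclideanSpace ℝ (Fin n) → EuclideanSpace ℝ (Fin n) → ℝ)
    (γ : ℝ → EuclideanSpace ℝ (Fin n)) (a b : ℝ) : ℝ≥0∞ :=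
  ∫⁻ s in Icc a b, ENNReal.ofReal (L (γ s) (deriv γ s))

/-- The length metric induced on `Ω ⊆ ℝⁿ` by the family of norms `L`: the infimum of the
`L`-lengths of piecewise `C¹` paths staying in `Ω` that join `x` to `y`. -/
noncomputable def lagrangianDist (Ω : Set (EuclideanSpace ℝ (Fin n)))
    (L : EuclideanSpace ℝ (Fin n) → EuclideanSpace ℝ (Fin n) → ℝ)
    (x y : EuclideanSpace ℝ (Fin n)) : ℝ≥0∞ :=
  ⨅ (γ : ℝ → EuclideanSpace ℝ (Fin n)) (a : ℝ) (b : ℝ)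
    (_ : IsPiecewiseC1On γ a b ∧ MapsTo γ (Icc a b) Ω ∧ γ a = x ∧ γ b = y),
    lagrangianLen L γ a b

open MeasureTheory

theorem Fin.sum_succ_sub_castSucc {M : Type*} [AddCommGroup M] {k : ℕ} (f : Fin (k + 1) → M) :
    ∑ i : Fin k, (f i.succ - f i.castSucc) = f (Fin.last k) - f 0 := by
  induction k with
  | zero => simp
  | succ k ih =>
    rw [Fin.sum_univ_castSucc, Fin.succ_last]
    simp only [Fin.succ_castSucc]
    rw [ih (fun j => f j.castSucc), Fin.castSucc_zero]
    abel

theorem ENNReal.ofReal_sum_le {ι : Type*} (s : Finset ι) (f : ι → ℝ) :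
    ENNReal.ofReal (∑ i ∈ s, f i) ≤ ∑ i ∈ s, ENNReal.ofReal (f i) := by
  classical
  induction s using Finset.induction with
  | empty => simp
  | insert _ _ h ih =>
    rw [Finset.sum_insert h, Finset.sum_insert h]
    exact ENNReal.ofReal_add_le.trans (add_le_add le_rfl ih)

theorem Monotone.pairwise_disjoint_on_Ioc_castSucc_succ {α : Type*} [Preorder α] {k : ℕ}
    {T : Fin (k + 1) → α} (hT : Monotone T) :
    Pairwise (Function.onFun Disjoint fun i : Fin k => Ioc (T i.castSucc) (T i.succ)) := by
  intro i j hij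
  simpa [Function.onFun] using
    hT.pairwise_disjoint_on_Ioc_succ.comp_of_injective (Fin.castSucc_injective k) hij

theorem IsPiecewiseC1On.ofReal_sub_le_lagrangianLen
    {L : EuclideanSpace ℝ (Fin n) → EuclideanSpace ℝ (Fin n) → ℝ}
    {γ : ℝ → EuclideanSpace ℝ (Fin n)} {a b : ℝ} (hγ : IsPiecewiseC1On γ a b) (u : ℝ → ℝ)
    (hu : ∀ c d, c ≤ d → Icc c d ⊆ Icc a b → ContDiffOn ℝ 1 γ (Icc c d) →
      ENNReal.ofReal (u d - u c) ≤ ∫⁻ s in Icc c d, ENNReal.ofReal (L (γ s) (deriv γ s))) :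
    ENNReal.ofReal (u b - u a) ≤ lagrangianLen L γ a b := by
  obtain ⟨-, -, k, T, hT, hT0, hTk, hC1⟩ := hγ
  have hsub (i : Fin k) : Icc (T i.castSucc) (T i.succ) ⊆ Icc a b :=
    Icc_subset_Icc (hT0 ▸ hT (Fin.zero_le _)) (hTk ▸ hT (Fin.le_last _))
  calc ENNReal.ofReal (u b - u a)
      = ENNReal.ofReal (∑ i : Fin k, (u (T i.succ) - u (T i.castSucc))) := by
        rw [Fin.sum_succ_sub_castSucc (fun j => u (T j)), hT0, hTk]
    _ ≤ ∑ i : Fin k, ENNReal.ofReal (u (T i.succ) - u (T i.castSucc)) := ENNReal.ofReal_sum_le _ _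
    _ ≤ ∑ i : Fin k, ∫⁻ s in Ioc (T i.castSucc) (T i.succ), ENNReal.ofReal (L (γ s) (deriv γ s)) :=
        Finset.sum_le_sum fun i _ => by
          rw [Measure.restrict_congr_set Ioc_ae_eq_Icc]
          exact hu _ _ (hT Fin.castSucc_lt_succ.le) (hsub i) (hC1 i)
    _ = ∫⁻ s in ⋃ i : Fin k, Ioc (T i.castSucc) (T i.succ),
          ENNReal.ofReal (L (γ s) (deriv γ s)) := by
        rw [lintegral_iUnion (fun _ => measurableSet_Ioc) hT.pairwise_disjoint_on_Ioc_castSucc_succ,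
          tsum_fintype]
    _ ≤ lagrangianLen L γ a b :=
        lintegral_mono_set (iUnion_subset fun i => Ioc_subset_Icc_self.trans (hsub i))

section Conformal

variable {I : Set ℝ} {ρ F : ℝ → ℝ}

theorem ofReal_sub_le_lintegral_mul_abs_deriv (hF : ∀ y ∈ I, HasDerivAt F (ρ y) y)
    (hρ : ContinuousOn ρ I) (hρ0 : ∀ y ∈ I, 0 ≤ ρ y) {φ : ℝ → ℝ} {c d : ℝ} (hcd : c ≤ d)
    (hφ : ContDiffOn ℝ 1 φ (Icc c d)) (hφI : MapsTo φ (Icc c d) I) :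
    ENNReal.ofReal (F (φ d) - F (φ c))
      ≤ ∫⁻ s in Icc c d, ENNReal.ofReal (ρ (φ s) * |deriv φ s|) := by
  rcases hcd.eq_or_lt with rfl | hlt
  · simp
  set φ' := derivWithin φ (Icc c d)
  have hφ'_eq : ∀ s ∈ Ioo c d, φ' s = deriv φ s := fun s hs =>
    derivWithin_of_mem_nhds (Icc_mem_nhds hs.1 hs.2)
  have hφ_deriv : ∀ s ∈ Ioo c d, HasDerivAt φ (φ' s) s := fun s hs => by
    rw [hφ'_eq s hs]
    exact ((hφ.contDiffAt (Icc_mem_nhds hs.1 hs.2)).differentiableAt one_ne_zero).hasDerivAt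
  have hcont : ContinuousOn (fun s => ρ (φ s) * φ' s) (Icc c d) :=
    (hρ.comp hφ.continuousOn hφI).mul (hφ.continuousOn_derivWithin (uniqueDiffOn_Icc hlt) le_rfl)
  have hFTC : ∫ s in Icc c d, ρ (φ s) * φ' s = F (φ d) - F (φ c) := by
    rw [integral_Icc_eq_integral_Ioc, ← intervalIntegral.integral_of_le hcd]
    refine intervalIntegral.integral_eq_sub_of_hasDerivAt_of_le hcd
      (fun s hs => (hF _ (hφI hs)).continuousAt.comp_continuousWithinAt (hφ.continuousOn s hs))
      (fun s hs => (hF _ (hφI (Ioo_subset_Icc_self hs))).comp s (hφ_deriv s hs))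
      (hcont.intervalIntegrable_of_Icc hcd)
  calc ENNReal.ofReal (F (φ d) - F (φ c)) ≤ ‖∫ s in Icc c d, ρ (φ s) * φ' s‖ₑ :=
        hFTC ▸ Real.ofReal_le_enorm _
    _ ≤ ∫⁻ s in Icc c d, ‖ρ (φ s) * φ' s‖ₑ := enorm_integral_le_lintegral_enorm _
    _ = ∫⁻ s in Icc c d, ENNReal.ofReal (ρ (φ s) * |deriv φ s|) := by
        rw [← restrict_Ioo_eq_restrict_Icc]
        refine setLIntegral_congr_fun measurableSet_Ioo fun s hs => ?_
        rw [hφ'_eq s hs, Real.enorm_eq_ofReal_abs, abs_mul,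
          abs_of_nonneg (hρ0 _ (hφI (Ioo_subset_Icc_self hs)))]

theorem ofReal_sub_le_lintegral_mul_norm_deriv (hF : ∀ y ∈ I, HasDerivAt F (ρ y) y)
    (hρ : ContinuousOn ρ I) (hρ0 : ∀ y ∈ I, 0 ≤ ρ y) (i : Fin n)
    {γ : ℝ → EuclideanSpace ℝ (Fin n)} {c d : ℝ} (hcd : c ≤ d) (hγ : ContDiffOn ℝ 1 γ (Icc c d))
    (hγI : ∀ s ∈ Icc c d, γ s i ∈ I) :
    ENNReal.ofReal (F (γ d i) - F (γ c i))
      ≤ ∫⁻ s in Icc c d, ENNReal.ofReal (ρ (γ s i) * ‖deriv γ s‖) := by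
  refine (ofReal_sub_le_lintegral_mul_abs_deriv (φ := fun s => γ s i) hF hρ hρ0 hcd
    ((EuclideanSpace.proj (𝕜 := ℝ) i).contDiff.comp_contDiffOn hγ) hγI).trans ?_
  rw [← restrict_Ioo_eq_restrict_Icc]
  refine setLIntegral_mono' measurableSet_Ioo fun s hs => ENNReal.ofReal_le_ofReal ?_
  have hγs : HasDerivAt γ (deriv γ s) s :=
    ((hγ.contDiffAt (Icc_mem_nhds hs.1 hs.2)).differentiableAt one_ne_zero).hasDerivAt
  have hcoord : deriv (fun t => γ t i) s = deriv γ s i :=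
    ((EuclideanSpace.proj (𝕜 := ℝ) i).hasFDerivAt.comp_hasDerivAt s hγs).deriv
  rw [hcoord, ← Real.norm_eq_abs]
  exact mul_le_mul_of_nonneg_left (PiLp.norm_apply_le (deriv γ s) i)
    (hρ0 _ (hγI s (Ioo_subset_Icc_self hs)))

theorem lintegral_ofReal_eq_sub_of_hasDerivAt (hF : ∀ y ∈ I, HasDerivAt F (ρ y) y)
    (hρ : ContinuousOn ρ I) (hρ0 : ∀ y ∈ I, 0 ≤ ρ y) {a b : ℝ} (hab : a ≤ b) (hI : Icc a b ⊆ I) :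
    ∫⁻ s in Icc a b, ENNReal.ofReal (ρ s) = ENNReal.ofReal (F b - F a) := by
  have hint : IntegrableOn ρ (Icc a b) := (hρ.mono hI).integrableOn_Icc
  rw [← ofReal_integral_eq_lintegral_ofReal hint
    ((ae_restrict_iff' measurableSet_Icc).2 (.of_forall fun s hs => hρ0 s (hI hs))),
    integral_Icc_eq_integral_Ioc, ← intervalIntegral.integral_of_le hab,
    intervalIntegral.integral_eq_sub_of_hasDerivAt_of_le hab
      (fun s hs => (hF s (hI hs)).continuousAt.continuousWithinAt)
      (fun s hs => hF s (hI (Ioo_subset_Icc_self hs))) ((hρ.mono hI).intervalIntegrable_of_Icc hab)]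

theorem lagrangianLen_coordLine (ρ : ℝ → ℝ) (p : EuclideanSpace ℝ (Fin n)) (i : Fin n) (a b : ℝ) :
    lagrangianLen (fun z v => ρ (z i) * ‖v‖) (fun t => p + (t - p i) • EuclideanSpace.single i 1)
      a b = ∫⁻ s in Icc a b, ENNReal.ofReal (ρ s) := by
  have hderiv (t : ℝ) : deriv (fun t => p + (t - p i) • EuclideanSpace.single i (1 : ℝ)) t
      = EuclideanSpace.single i 1 :=
    ((((hasDerivAt_id t).sub_const _).smul_const _).const_add p).deriv.trans (one_smul _ _)
  simp [lagrangianLen, hderiv]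

theorem lagrangianDist_eq_sub_of_eq_add_single (hF : ∀ y ∈ I, HasDerivAt F (ρ y) y)
    (hρ : ContinuousOn ρ I) (hρ0 : ∀ y ∈ I, 0 ≤ ρ y) (hI : I.OrdConnected) (i : Fin n)
    {p q : EuclideanSpace ℝ (Fin n)} (hpq : p i ≤ q i) (hp : p i ∈ I) (hq : q i ∈ I)
    (hqp : q = p + (q i - p i) • EuclideanSpace.single i 1) :
    lagrangianDist {z | z i ∈ I} (fun z v => ρ (z i) * ‖v‖) p q
      = ENNReal.ofReal (F (q i) - F (p i)) := by
  apply le_antisymm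
  · set γ := fun t : ℝ => p + (t - p i) • EuclideanSpace.single i (1 : ℝ)
    have hγi (t : ℝ) : γ t i = t := by simp [γ]
    have hγ : ContDiff ℝ 1 γ := by fun_prop
    have hpath : IsPiecewiseC1On γ (p i) (q i) := ⟨hpq, hγ.continuous.continuousOn, 1,
      ![p i, q i], Fin.monotone_iff_le_succ.2 (by simpa using hpq), rfl, rfl,
      fun _ => hγ.contDiffOn⟩
    have hmaps : MapsTo γ (Icc (p i) (q i)) {z | z i ∈ I} := fun t ht => by
      simpa [hγi] using hI.out hp hq ht
    refine iInf₂_le_of_le γ (p i) <| iInf₂_le_of_le (q i)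
      ⟨hpath, hmaps, by simp [γ], hqp.symm⟩ ?_
    rw [lagrangianLen_coordLine, lintegral_ofReal_eq_sub_of_hasDerivAt hF hρ hρ0 hpq (hI.out hp hq)]
  · simp only [lagrangianDist, le_iInf_iff]
    rintro γ a b ⟨hγ, hmaps, rfl, rfl⟩
    exact hγ.ofReal_sub_le_lagrangianLen (fun t => F (γ t i)) fun c d hcd hsub hC1 =>
      ofReal_sub_le_lintegral_mul_norm_deriv hF hρ hρ0 i hcd hC1 fun s hs => hmaps (hsub hs)

end Conformal

def maxNormPotential (y : ℝ) : ℝ := if y ≤ 1 then Real.log y else y - 1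

theorem maxNormPotential_of_le_one {y : ℝ} (h : y ≤ 1) : maxNormPotential y = Real.log y :=
  if_pos h

theorem maxNormPotential_of_one_le {y : ℝ} (h : 1 ≤ y) : maxNormPotential y = y - 1 := by
  rcases h.eq_or_lt with rfl | h
  · simp [maxNormPotential]
  · exact if_neg h.not_ge

theorem hasDerivAt_maxNormPotential {y : ℝ} (hy : 0 < y) :
    HasDerivAt maxNormPotential (max 1 y⁻¹) y := by
  have hlog (h : y ≤ 1) : HasDerivWithinAt maxNormPotential y⁻¹ (Iic 1) y :=
    (Real.hasDerivAt_log hy.ne').hasDerivWithinAt.congr_of_mem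
      (fun _ hz => maxNormPotential_of_le_one hz) h
  have hlin (h : 1 ≤ y) : HasDerivWithinAt maxNormPotential 1 (Ici 1) y :=
    ((hasDerivAt_id y).sub_const 1).hasDerivWithinAt.congr_of_mem
      (fun _ hz => maxNormPotential_of_one_le hz) h
  rcases lt_trichotomy y 1 with h | rfl | h
  · rw [max_eq_right ((one_le_inv₀ hy).2 h.le)]
    exact (hlog h.le).hasDerivAt (Iic_mem_nhds h)
  · have hleft := hlog le_rfl
    rw [inv_one] at hleft
    have hboth := hleft.union (hlin le_rfl)
    rw [Iic_union_Ici, hasDerivWithinAt_univ] at hboth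
    simpa using hboth
  · rw [max_eq_left (inv_le_one_of_one_le₀ h.le)]
    exact (hlin h.le).hasDerivAt (Ici_mem_nhds h)

/-- On the upper half-plane `U = {(x,y) ∈ ℝ² | y > 0}`, let `d_m` be
the length metric induced by the pointwise maximum `‖v‖_m = max {‖v‖_e, ‖v‖_h}` of the
Euclidean norm `‖v‖_e` and the hyperbolic norm `‖v‖_h = ‖v‖_e / y`. Then for all
`0 < y₁ < 1 < y₂`, the distance between `(0, y₁)` and `(0, y₂)` is
`d_m((0,y₁),(0,y₂)) = (y₂ − 1) − log y₁`. -/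
theorem halfplane_max_metric_dist (y₁ y₂ : ℝ)
    (h₀ : 0 < y₁) (h₁ : y₁ < 1) (h₂ : 1 < y₂)
    (p q : EuclideanSpace ℝ (Fin 2))
    (hp0 : p 0 = 0) (hp1 : p 1 = y₁) (hq0 : q 0 = 0) (hq1 : q 1 = y₂) :
    lagrangianDist {z : EuclideanSpace ℝ (Fin 2) | 0 < z 1}
        (fun z v => max ‖v‖ (‖v‖ / z 1)) p q
      = ENNReal.ofReal ((y₂ - 1) - Real.log y₁) := by
  have hL : (fun z v : EuclideanSpace ℝ (Fin 2) => max ‖v‖ (‖v‖ / z 1))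
      = fun z v => max 1 (z 1)⁻¹ * ‖v‖ := by
    funext z v
    rw [max_mul_of_nonneg _ _ (norm_nonneg v), one_mul, div_eq_inv_mul]
  have hqp : q = p + (q 1 - p 1) • EuclideanSpace.single 1 1 := by
    ext j
    fin_cases j <;> simp [hp0, hq0]
  have hρ : ContinuousOn (fun y : ℝ => max 1 y⁻¹) (Ioi 0) :=
    continuousOn_const.sup (continuousOn_inv₀.mono fun _ hy => ne_of_gt hy)
  rw [hL]
  refine (lagrangianDist_eq_sub_of_eq_add_single (fun _ hy => hasDerivAt_maxNormPotential hy) hρ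
    (fun _ _ => zero_le_one.trans (le_max_left _ _)) ordConnected_Ioi 1
    (by linarith) (hp1 ▸ h₀) (hq1 ▸ zero_lt_one.trans h₂) hqp).trans ?_
  rw [hp1, hq1, maxNormPotential_of_le_one h₁.le, maxNormPotential_of_one_le h₂.le]
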